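/- arXiv:1302.2185 — 3 statements merged into one kernel-verified Lean document; each statement's English description precedes it below -/
import Mathlib

section
/- Let k be a positive natural number, let n : Fin k → ℝ satisfy n i > 0 for all i, let P > 0, and let ν ∈ ℝ satisfy ∑ i, max (ν − n i) 0 = P. Then for every power allocation p : Fin k → ℝ with p i ≥ 0 for all i and ∑ i, p i ≤ P, one has ∑ i, Real.log (1 + p i / n i) ≤ ∑ i, Real.log (1 + (max (ν − n i) 0) / n i). In other words, the water-filling allocation p i = (ν − n i)⁺ maximizes the total rate ∑ i log(1 + p i / n i) subject to the power budget P. -/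
/-!
The objective is concave, so it lies below its tangent at the water-filling allocation
`q i = (ν - n i)⁺`. The tangent has slope `1 / (n i + q i)` in coordinate `i`, which equals
`1 / ν` where `q i > 0` and is at most `1 / ν` where `q i = 0`; these are the KKT conditions.
Hence the gain of any feasible `p` over `q` is at most `(∑ p i - ∑ q i) / ν ≤ 0`.
-/

open Finset Real

lemma Real.log_sub_log_le_sub_div {a b : ℝ} (ha : 0 < a) (hb : 0 < b) :
    log a - log b ≤ (a - b) / b := by
  rw [← log_div ha.ne' hb.ne', sub_div, div_self hb.ne']
  exact log_le_sub_one_of_pos (div_pos ha hb)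

lemma Real.log_one_add_div_sub_le {n p q : ℝ} (hn : 0 < n) (hp : 0 ≤ p) (hq : 0 ≤ q) :
    log (1 + p / n) - log (1 + q / n) ≤ (p - q) / (n + q) := by
  have hnp : 0 < 1 + p / n := by positivity
  have hnq : 0 < 1 + q / n := by positivity
  calc log (1 + p / n) - log (1 + q / n)
      ≤ (1 + p / n - (1 + q / n)) / (1 + q / n) := log_sub_log_le_sub_div hnp hnq
    _ = (p - q) / (n + q) := by
      field_simp
      ring

lemma sub_div_add_max_sub_le {n p ν : ℝ} (hν : 0 < ν) (hp : 0 ≤ p) :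
    (p - max (ν - n) 0) / (n + max (ν - n) 0) ≤ (p - max (ν - n) 0) / ν := by
  rcases le_total ν n with hνn | hnν
  · rw [max_eq_right (sub_nonpos.2 hνn), sub_zero, add_zero]
    exact div_le_div_of_nonneg_left hp hν hνn
  · rw [max_eq_left (sub_nonneg.2 hnν), add_sub_cancel]

lemma pos_of_sum_max_sub_pos {ι : Type*} {s : Finset ι} {n : ι → ℝ} {ν : ℝ}
    (hn : ∀ i ∈ s, 0 ≤ n i) (h : 0 < ∑ i ∈ s, max (ν - n i) 0) : 0 < ν := by
  by_contra! hν
  refine h.ne' (sum_eq_zero fun i hi => max_eq_right ?_)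
  linarith [hn i hi]

theorem waterfilling_optimal_general (k : ℕ) (n : Fin k → ℝ)
    (hn : ∀ i, 0 < n i) (P : ℝ) (hP : 0 < P) (ν : ℝ)
    (hν : ∑ i, max (ν - n i) 0 = P)
    (p : Fin k → ℝ) (hp : ∀ i, 0 ≤ p i) (hsum : ∑ i, p i ≤ P) :
    ∑ i, Real.log (1 + p i / n i) ≤
      ∑ i, Real.log (1 + max (ν - n i) 0 / n i) := by
  set q : Fin k → ℝ := fun i => max (ν - n i) 0
  have hν_pos : 0 < ν := pos_of_sum_max_sub_pos (fun i _ => (hn i).le) (hν ▸ hP)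
  suffices ∑ i, (log (1 + p i / n i) - log (1 + q i / n i)) ≤ 0 by
    rw [sum_sub_distrib] at this
    linarith
  calc ∑ i, (log (1 + p i / n i) - log (1 + q i / n i))
      ≤ ∑ i, (p i - q i) / (n i + q i) :=
        sum_le_sum fun i _ => log_one_add_div_sub_le (hn i) (hp i) (le_max_right _ _)
    _ ≤ ∑ i, (p i - q i) / ν := sum_le_sum fun i _ => sub_div_add_max_sub_le hν_pos (hp i)
    _ = (∑ i, p i - ∑ i, q i) / ν := by rw [← sum_sub_distrib, sum_div]
    _ ≤ 0 := div_nonpos_of_nonpos_of_nonneg (by linarith) hν_pos.le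

/-- Water-filling optimality (finite, per-subcarrier): the allocation
`p i = (ν − n i)⁺` maximizes `∑ i log (1 + p i / n i)` subject to `∑ p i ≤ P`. -/
theorem waterfilling_optimal (k : ℕ) (hk : 0 < k) (n : Fin k → ℝ)
    (hn : ∀ i, 0 < n i) (P : ℝ) (hP : 0 < P) (ν : ℝ)
    (hν : ∑ i, max (ν - n i) 0 = P)
    (p : Fin k → ℝ) (hp : ∀ i, 0 ≤ p i) (hsum : ∑ i, p i ≤ P) :
    ∑ i, Real.log (1 + p i / n i) ≤
      ∑ i, Real.log (1 + max (ν - n i) 0 / n i) :=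
  waterfilling_optimal_general k n hn P hP ν hν p hp hsum
end

section
/- Let S : ℝ → ℝ be a measurable noise power spectral density with c ≤ S f for all f ∈ [−π, π] for some constant c > 0, let P > 0, and let ν ∈ ℝ satisfy ∫ f in Set.Icc (−π) π, max (ν − S f) 0 = P (Lebesgue integral). Then for every measurable p : ℝ → ℝ with 0 ≤ p f for all f ∈ [−π, π], with p integrable on [−π, π], and with ∫ f in Set.Icc (−π) π, p f ≤ P, one has ∫ f in Set.Icc (−π) π, Real.log (1 + p f / S f) ≤ ∫ f in Set.Icc (−π) π, Real.log (1 + (max (ν − S f) 0) / S f). (Both integrands are nonnegative and bounded above by p f / c, resp. (ν − S f)⁺ / c, so both integrals are well-defined and finite.) -/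
/-!
With `q := (ν - S)⁺`, concavity of `log` gives, pointwise,
`log (1 + p/S) - log (1 + q/S) ≤ (p - q) / (S + q)`. Where `q > 0` the denominator is
exactly the water level `ν`; where `q = 0` we have `S ≥ ν` and `p - q = p ≥ 0`, so in both cases
the right side is at most `(p - q) / ν`. Integrating, the capacity gap is at most
`(∫ p - P) / ν ≤ 0`.
-/

open MeasureTheory Real

theorem log_one_add_div_sub_log_one_add_div_le {s x y : ℝ} (hs : 0 < s) (hx : 0 ≤ x)
    (hy : 0 ≤ y) : log (1 + x / s) - log (1 + y / s) ≤ (x - y) / (s + y) := by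
  have hsx : 0 < s + x := by linarith
  have hsy : 0 < s + y := by linarith
  calc log (1 + x / s) - log (1 + y / s) = log ((s + x) / (s + y)) := by
        rw [← log_div (by positivity) (by positivity)]
        congr 1
        field_simp
    _ ≤ (s + x) / (s + y) - 1 := log_le_sub_one_of_pos (by positivity)
    _ = (x - y) / (s + y) := by field_simp; ring

theorem log_one_add_div_sub_log_one_add_waterfill_le {s x ν : ℝ} (hs : 0 < s) (hν : 0 < ν)
    (hx : 0 ≤ x) :
    log (1 + x / s) - log (1 + max (ν - s) 0 / s) ≤ (x - max (ν - s) 0) / ν := by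
  refine (log_one_add_div_sub_log_one_add_div_le hs hx (le_max_right _ _)).trans ?_
  rcases le_total (ν - s) 0 with hle | hge
  · rw [max_eq_right hle, sub_zero, add_zero]
    exact div_le_div_of_nonneg_left hx hν (by linarith)
  · rw [max_eq_left hge, add_sub_cancel]

section

variable {α : Type*} [MeasurableSpace α] {μ : Measure α} {s : Set α} {S : α → ℝ}

theorem integrableOn_log_one_add_div {g : α → ℝ} {c : ℝ} (hs : MeasurableSet s)
    (hS : AEMeasurable S (μ.restrict s)) (hc : 0 < c) (hSc : ∀ x ∈ s, c ≤ S x)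
    (hg : IntegrableOn g s μ) (hg0 : ∀ x ∈ s, 0 ≤ g x) :
    IntegrableOn (fun x => log (1 + g x / S x)) s μ := by
  refine (hg.div_const c).mono'
    (aemeasurable_const.add (hg.aemeasurable.div hS)).log.aestronglyMeasurable ?_
  filter_upwards [ae_restrict_mem hs] with x hx
  have hgS : 0 ≤ g x / S x := div_nonneg (hg0 x hx) (hc.trans_le (hSc x hx)).le
  rw [norm_of_nonneg (log_nonneg (by linarith))]
  calc log (1 + g x / S x) ≤ 1 + g x / S x - 1 := log_le_sub_one_of_pos (by linarith)
    _ = g x / S x := add_sub_cancel_left 1 _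
    _ ≤ g x / c := div_le_div_of_nonneg_left (hg0 x hx) hc (hSc x hx)

theorem pos_of_setIntegral_waterfill_pos {ν : ℝ} (hS : ∀ x ∈ s, 0 < S x)
    (hpos : 0 < ∫ x in s, max (ν - S x) 0 ∂μ) : 0 < ν := by
  by_contra! hν
  refine hpos.ne' (setIntegral_eq_zero_of_forall_eq_zero fun x hx => max_eq_right ?_)
  linarith [hS x hx]

end

theorem waterfilling_optimal_continuous_general (S : ℝ → ℝ) (hS : Measurable S)
    (c : ℝ) (hc : 0 < c) (hSc : ∀ f ∈ Set.Icc (-π) π, c ≤ S f)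
    (P : ℝ) (hP : 0 < P) (ν : ℝ)
    (hν : ∫ f in Set.Icc (-π) π, max (ν - S f) 0 = P)
    (p : ℝ → ℝ)
    (hp0 : ∀ f ∈ Set.Icc (-π) π, 0 ≤ p f)
    (hpint : IntegrableOn p (Set.Icc (-π) π))
    (hpP : ∫ f in Set.Icc (-π) π, p f ≤ P) :
    ∫ f in Set.Icc (-π) π, Real.log (1 + p f / S f) ≤
      ∫ f in Set.Icc (-π) π, Real.log (1 + max (ν - S f) 0 / S f) := by
  set I := Set.Icc (-π) π
  set q : ℝ → ℝ := fun f => max (ν - S f) 0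
  have hSpos : ∀ f ∈ I, 0 < S f := fun f hf => hc.trans_le (hSc f hf)
  have hν0 : 0 < ν := pos_of_setIntegral_waterfill_pos hSpos (hν ▸ hP)
  have hqint : IntegrableOn q I := .of_integral_ne_zero (hν ▸ hP.ne')
  have hlogp := integrableOn_log_one_add_div measurableSet_Icc hS.aemeasurable hc hSc hpint hp0
  have hlogq := integrableOn_log_one_add_div measurableSet_Icc hS.aemeasurable hc hSc hqint
    fun f _ => le_max_right _ _
  have hgap : ∫ f in I, (log (1 + p f / S f) - log (1 + q f / S f)) ≤
      ∫ f in I, (p f - q f) / ν :=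
    setIntegral_mono_on (hlogp.sub hlogq) ((hpint.sub hqint).div_const ν) measurableSet_Icc
      fun f hf => log_one_add_div_sub_log_one_add_waterfill_le (hSpos f hf) hν0 (hp0 f hf)
  rw [integral_sub hlogp hlogq, integral_div, integral_sub hpint hqint, hν] at hgap
  have hbudget : ((∫ f in I, p f) - P) / ν ≤ 0 :=
    div_nonpos_of_nonpos_of_nonneg (by linarith) hν0.le
  linarith

/-- Continuous-frequency water-filling optimality over the band `[−π, π]`. -/
theorem waterfilling_optimal_continuous (S : ℝ → ℝ) (hS : Measurable S)
    (c : ℝ) (hc : 0 < c) (hSc : ∀ f ∈ Set.Icc (-π) π, c ≤ S f)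
    (P : ℝ) (hP : 0 < P) (ν : ℝ)
    (hν : ∫ f in Set.Icc (-π) π, max (ν - S f) 0 = P)
    (p : ℝ → ℝ) (hpm : Measurable p)
    (hp0 : ∀ f ∈ Set.Icc (-π) π, 0 ≤ p f)
    (hpint : IntegrableOn p (Set.Icc (-π) π))
    (hpP : ∫ f in Set.Icc (-π) π, p f ≤ P) :
    ∫ f in Set.Icc (-π) π, Real.log (1 + p f / S f) ≤
      ∫ f in Set.Icc (-π) π, Real.log (1 + max (ν - S f) 0 / S f) :=
  waterfilling_optimal_continuous_general S hS c hc hSc P hP ν hν p hp0 hpint hpP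
end

section
/- Let T be a natural number with T ≥ 2 and let P_R > 0 be fixed. For P_D > 0 define σ_τ²(P_D) = P_R·(T−1)·T·(2T−1)/6 / (P_D + (T−1)·P_R) − (P_R·T·(T−1)/2 / (P_D + (T−1)·P_R))², the squared RMS delay spread of the two-level power delay profile with direct-path power P_D and reflected-path power P_R. Then σ_τ² attains its maximum over P_D ∈ (0, ∞) at the unique point P_D* = (T² − 1)·P_R / (2T − 1); moreover σ_τ² is strictly increasing on (0, P_D*] and strictly decreasing on [P_D*, ∞) (for T ≥ 3; for T = 2 the same holds with P_D* = P_R). -/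
/-!
With `u = 1 / (P_D + (T − 1) P_R)` the squared delay spread is the concave quadratic `A u − B u²`,
and `u` decreases in `P_D`; so `σ_τ²` rises until `u` reaches the vertex `A / (2B)`, i.e. until
`P_D + (T − 1) P_R = 2B / A`, and falls afterwards. For the two-level profile
`2B / A = 3T(T − 1) P_R / (2T − 1)`, which is exactly `P_D* + (T − 1) P_R`.
-/

open Set

noncomputable def invQuad (a b x : ℝ) : ℝ := a / x - b / x ^ 2

section InvQuad

variable {a b x y : ℝ}

lemma invQuad_sub_invQuad (hx : x ≠ 0) (hy : y ≠ 0) :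
    invQuad a b y - invQuad a b x = (y - x) * (b * (x + y) - a * x * y) / (x * y) ^ 2 := by
  unfold invQuad
  field_simp
  ring

lemma invQuad_strictMonoOn (ha : 0 < a) : StrictMonoOn (invQuad a b) (Ioc 0 (2 * b / a)) := by
  rintro x ⟨hx, -⟩ y ⟨hy, hym⟩ hxy
  have hbm : 2 * b = a * (2 * b / a) := by field_simp
  have key : a * x * y < b * (x + y) := by
    nlinarith [mul_le_mul_of_nonneg_left hym hx.le, mul_lt_mul_of_pos_right (hxy.trans_le hym) hy]
  rw [← sub_pos, invQuad_sub_invQuad hx.ne' hy.ne']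
  exact div_pos (mul_pos (sub_pos.2 hxy) (sub_pos.2 key)) (by positivity)

lemma invQuad_strictAntiOn (ha : 0 < a) (hb : 0 < b) :
    StrictAntiOn (invQuad a b) (Ici (2 * b / a)) := by
  rintro x (hmx : _ ≤ x) y - hxy
  have hx : 0 < x := (by positivity : 0 < 2 * b / a).trans_le hmx
  have hy : 0 < y := hx.trans hxy
  have hbm : 2 * b = a * (2 * b / a) := by field_simp
  have key : b * (x + y) < a * x * y := by
    nlinarith [mul_le_mul_of_nonneg_right hmx hy.le, mul_lt_mul_of_pos_left (hmx.trans_lt hxy) hx]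
  rw [← sub_neg, invQuad_sub_invQuad hx.ne' hy.ne']
  exact div_neg_of_neg_of_pos (mul_neg_of_pos_of_neg (sub_pos.2 hxy) (sub_neg.2 key))
    (by positivity)

end InvQuad

lemma eq_of_strictMonoOn_Ioc_of_strictAntiOn_Ici {α β : Type*} [LinearOrder α] [Preorder β]
    {a b x : α} {f : α → β} (h₀ : StrictMonoOn f (Ioc a b)) (h₁ : StrictAntiOn f (Ici b))
    (hx : x ∈ Ioi a) (hfx : f x = f b) : x = b := by
  by_contra hne
  rcases lt_or_gt_of_ne hne with hxb | hbx
  · exact (h₀ ⟨hx, hxb.le⟩ (right_mem_Ioc.2 (hx.trans hxb)) hxb).ne hfx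
  · exact (h₁ self_mem_Ici hbx.le hbx).ne hfx

/-- The squared RMS delay spread of the two-level power delay profile, as a
function of the direct-path power `P_D`, attains its maximum over
`P_D ∈ (0, ∞)` at the unique point `P_D* = (T² − 1)·P_R / (2T − 1)`; it is
strictly increasing on `(0, P_D*]` and strictly decreasing on `[P_D*, ∞)`.
(For `T = 2` the formula gives `P_D* = P_R`.) -/
theorem twoLevel_delay_spread_max (T : ℕ) (hT : 2 ≤ T) (PR : ℝ) (hPR : 0 < PR) :
    let σ2 : ℝ → ℝ := fun PD =>
      PR * (((T : ℝ) - 1) * (T : ℝ) * (2 * (T : ℝ) - 1) / 6) / (PD + ((T : ℝ) - 1) * PR)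
        - (PR * ((T : ℝ) * ((T : ℝ) - 1) / 2) / (PD + ((T : ℝ) - 1) * PR)) ^ 2
    let PDstar : ℝ := ((T : ℝ) ^ 2 - 1) * PR / (2 * (T : ℝ) - 1)
    (∀ PD ∈ Set.Ioi (0 : ℝ), σ2 PD ≤ σ2 PDstar) ∧
    (∀ PD ∈ Set.Ioi (0 : ℝ), σ2 PD = σ2 PDstar → PD = PDstar) ∧
    StrictMonoOn σ2 (Set.Ioc 0 PDstar) ∧
    StrictAntiOn σ2 (Set.Ici PDstar) := by
  intro σ2 PDstar
  have hT1 : 0 < (T : ℝ) - 1 := by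
    have : (2 : ℝ) ≤ T := by exact_mod_cast hT
    linarith
  set A := PR * (((T : ℝ) - 1) * T * (2 * T - 1) / 6)
  set B := (PR * (T * ((T : ℝ) - 1) / 2)) ^ 2
  set c := ((T : ℝ) - 1) * PR
  have hA : 0 < A := by
    have : 0 < 2 * (T : ℝ) - 1 := by linarith
    have : 0 < (T : ℝ) := by linarith
    positivity
  have hB : 0 < B := by positivity
  have hc : 0 < c := mul_pos hT1 hPR
  have hσ : σ2 = fun PD => invQuad A B (PD + c) := by
    funext PD
    simp only [σ2, invQuad, div_pow]
    rfl
  have hvertex : PDstar + c = 2 * B / A := by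
    have h2T : 2 * (T : ℝ) - 1 ≠ 0 := by linarith
    rw [div_add' _ _ _ h2T, div_eq_div_iff h2T hA.ne']
    ring
  have hmono : StrictMonoOn σ2 (Ioc 0 PDstar) := hσ ▸
    (invQuad_strictMonoOn hA).comp ((strictMono_id.add_const c).strictMonoOn _)
      fun x hx => ⟨by linarith [hx.1], by linarith [hx.2]⟩
  have hanti : StrictAntiOn σ2 (Ici PDstar) := hσ ▸
    (invQuad_strictAntiOn hA hB).comp_strictMonoOn ((strictMono_id.add_const c).strictMonoOn _)
      fun x (hx : PDstar ≤ x) => show 2 * B / A ≤ x + c by linarith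
  exact ⟨fun PD hPD => isMaxOn_Ioi_of_mono_anti hmono.monotoneOn hanti.antitoneOn hPD,
    fun PD hPD => eq_of_strictMonoOn_Ioc_of_strictAntiOn_Ici hmono hanti hPD, hmono, hanti⟩
end
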